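/- arXiv:1212.1424 — 3 statements merged into one kernel-verified Lean document; each statement's English description precedes it below -/
import Mathlib

section
/- Let H be a hereditary abelian k-category and A a full subcategory of H closed under direct summands. Then A is abelian (as an exact abelian subcategory) and closed under extensions if and only if A is thick, i.e., whenever two terms of a short exact sequence in H lie in A, so does the third. -/
/-!
Thickness gives closure under kernels and cokernels as soon as the image of every morphism
between objects of `A` lies in `A`. Factor `f : X ⟶ Y` as `p : X ↠ I` followed by `I ↪ Y`.
Heredity extends the extension `0 → ker p → X → I → 0` along `I ↪ Y` to some
`0 → ker p → X' → Y → 0`, and a morphism of extensions that is the identity on the kernels is a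
pullback square, hence gives a short exact sequence `0 → X → X' ⊞ I → Y → 0`. Its outer terms
lie in `A`, so its middle term does, and `I` is a direct summand of it. Conversely, kernels and
cokernels are the third terms of short exact sequences.
-/

open CategoryTheory CategoryTheory.Limits

universe v u

variable {H : Type u} [Category.{v} H] [Abelian H]

/-- `(f, g)` form a short exact sequence `0 → A → B → C → 0`. -/
def IsShortExact {A B C : H} (f : A ⟶ B) (g : B ⟶ C) : Prop :=
  ∃ w : f ≫ g = 0, (ShortComplex.mk f g w).ShortExact

/-- `H` is hereditary: `Ext¹(B,K) → Ext¹(E,K)` is surjective for every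
monomorphism `E ⟶ B`, expressed element-wise: every extension of `E` by `K`
is the restriction (pullback) of an extension of `B` by `K`. -/
def Hereditary (H : Type u) [Category.{v} H] [Abelian H] : Prop :=
  ∀ (K X E B : H) (f : K ⟶ X) (g : X ⟶ E) (i : E ⟶ B), Mono i →
    IsShortExact f g →
    ∃ (X' : H) (f' : K ⟶ X') (g' : X' ⟶ B) (h : X ⟶ X'),
      IsShortExact f' g' ∧ f ≫ h = f' ∧ h ≫ g' = g ≫ i

/-- `A` is closed under isomorphisms. -/
def IsoClosed (A : H → Prop) : Prop := ∀ X Y : H, (X ≅ Y) → A X → A Y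

/-- `A` is closed under direct summands (retracts). -/
def SummandClosed (A : H → Prop) : Prop :=
  ∀ (X Y : H) (s : X ⟶ Y) (r : Y ⟶ X), s ≫ r = 𝟙 X → A Y → A X

/-- `A` is closed under extensions. -/
def ExtClosed (A : H → Prop) : Prop :=
  ∀ (X Y Z : H) (f : X ⟶ Y) (g : Y ⟶ Z), IsShortExact f g → A X → A Z → A Y

/-- `A` is closed under kernels (taken in `H`) of morphisms between its
objects. -/
def KernelClosed (A : H → Prop) : Prop :=
  ∀ (X Y : H) (f : X ⟶ Y), A X → A Y → A (kernel f)

/-- `A` is closed under cokernels (taken in `H`) of morphisms between its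
objects. -/
def CokernelClosed (A : H → Prop) : Prop :=
  ∀ (X Y : H) (f : X ⟶ Y), A X → A Y → A (cokernel f)

/-- `A` is thick: two-out-of-three for short exact sequences. -/
def ThickSub (A : H → Prop) : Prop :=
  ∀ (X Y Z : H) (f : X ⟶ Y) (g : Y ⟶ Z), IsShortExact f g →
    ((A X → A Y → A Z) ∧ (A X → A Z → A Y) ∧ (A Y → A Z → A X))

lemma isShortExact_kernel_ι {X I : H} (p : X ⟶ I) [Epi p] : IsShortExact (kernel.ι p) p :=
  ⟨kernel.condition p, .mk' (ShortComplex.exact_of_f_is_kernel _ (kernelIsKernel p))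
    inferInstance inferInstance⟩

lemma isShortExact_cokernel_π {I Y : H} (i : I ⟶ Y) [Mono i] : IsShortExact i (cokernel.π i) :=
  ⟨cokernel.condition i, .mk' (ShortComplex.exact_of_g_is_cokernel _ (cokernelIsCokernel i))
    inferInstance inferInstance⟩

lemma IsShortExact.isPullback {K X E X' B : H} {f : K ⟶ X} {g : X ⟶ E} {f' : K ⟶ X'}
    {g' : X' ⟶ B} (hfg : IsShortExact f g) (hfg' : IsShortExact f' g') {h : X ⟶ X'}
    {i : E ⟶ B} (hf : f ≫ h = f') (hg : h ≫ g' = g ≫ i) :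
    IsPullback h g g' i := by
  obtain ⟨w, hS⟩ := hfg
  obtain ⟨w', hS'⟩ := hfg'
  have := hS.epi_g
  have := hS'.mono_f
  let S := ShortComplex.mk (biprod.lift h g) (biprod.desc g' (-i)) (by simp [hg])
  have : Mono S.f := Preadditive.mono_of_cancel_zero _ fun x hx => by
    have hxh : x ≫ h = 0 := by simpa [S] using hx =≫ biprod.fst
    have hxg : x ≫ g = 0 := by simpa [S] using hx =≫ biprod.snd
    obtain ⟨k, rfl⟩ := KernelFork.IsLimit.lift' hS.fIsKernel x hxg
    have hk : k ≫ f' = 0 ≫ f' := by simpa [← hf] using hxh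
    simp [cancel_mono f' |>.1 hk]
  have hexact : S.Exact := by
    rw [ShortComplex.exact_iff_exact_up_to_refinements]
    intro T y hy
    have hy' : (y ≫ biprod.fst) ≫ g' = (y ≫ biprod.snd) ≫ i := by
      rw [← sub_eq_zero, ← hy]
      simp [S, biprod.desc_eq, sub_eq_add_neg]
    obtain ⟨T', π, _, x, hx⟩ := surjective_up_to_refinements_of_epi g (y ≫ biprod.snd)
    have hd : (π ≫ y ≫ biprod.fst - x ≫ h) ≫ g' = 0 := by
      rw [Preadditive.sub_comp, Category.assoc x, hg, ← Category.assoc x, ← hx]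
      simp [hy']
    obtain ⟨k, hk⟩ : ∃ k, k ≫ f' = _ := ⟨_, (KernelFork.IsLimit.lift' hS'.fIsKernel _ hd).2⟩
    refine ⟨T', π, inferInstance, x + k ≫ f, ?_⟩
    apply biprod.hom_ext
    · simp [S, hf, hk]
    · simp [S, w, hx]
  exact .of_isLimit ((CommSq.isLimitEquivIsLimitKernelFork ⟨hg⟩).symm hexact.fIsKernel)

lemma isShortExact_biprod_of_isPullback {X₁ X₂ X₃ X₄ : H} {t : X₁ ⟶ X₂} {l : X₁ ⟶ X₃}
    {r : X₂ ⟶ X₄} {b : X₃ ⟶ X₄} (sq : IsPullback t l r b) [Epi r] :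
    IsShortExact (biprod.lift t l) (biprod.desc r (-b)) :=
  have : Epi (biprod.desc r (-b)) := epi_of_epi_fac (biprod.inl_desc r (-b))
  have : Mono (biprod.lift t l) := mono_of_isLimit_fork sq.isLimitKernelFork
  ⟨sq.shortComplex'.zero, .mk' sq.exact_shortComplex' this inferInstance⟩

lemma Hereditary.exists_isShortExact_biprod (hH : Hereditary H) {X I Y : H} (p : X ⟶ I)
    (i : I ⟶ Y) [Epi p] [Mono i] :
    ∃ (X' : H) (a : X ⟶ X' ⊞ I) (b : X' ⊞ I ⟶ Y), IsShortExact a b := by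
  obtain ⟨X', f', g', h, hfg', hf, hg⟩ :=
    hH _ X I Y (kernel.ι p) p i inferInstance (isShortExact_kernel_ι p)
  have : Epi g' := hfg'.2.epi_g
  exact ⟨X', _, _,
    isShortExact_biprod_of_isPullback ((isShortExact_kernel_ι p).isPullback hfg' hf hg)⟩

omit [Abelian H] in
lemma SummandClosed.isoClosed {A : H → Prop} (hA : SummandClosed A) : IsoClosed A :=
  fun X Y e => hA Y X e.inv e.hom e.inv_hom_id

section Thick

variable {A : H → Prop}

lemma ThickSub.mem_image (hH : Hereditary H) (hA : ThickSub A) (hs : SummandClosed A)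
    {X Y : H} (f : X ⟶ Y) (hX : A X) (hY : A Y) : A (Abelian.image f) := by
  obtain ⟨X', a, b, hab⟩ :=
    hH.exists_isShortExact_biprod (Abelian.factorThruImage f) (Abelian.image.ι f)
  exact hs _ _ biprod.inr biprod.snd biprod.inr_snd ((hA _ _ _ a b hab).2.1 hX hY)

lemma ThickSub.kernelClosed (hH : Hereditary H) (hA : ThickSub A) (hs : SummandClosed A) :
    KernelClosed A := fun _ _ f hX hY =>
  hs.isoClosed _ _ ((kernelIsoOfEq (Abelian.image.fac f).symm).trans
      (kernelCompMono (Abelian.factorThruImage f) (Abelian.image.ι f))).symm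
    ((hA _ _ _ _ _ (isShortExact_kernel_ι _)).2.2 hX (hA.mem_image hH hs f hX hY))

lemma ThickSub.cokernelClosed (hH : Hereditary H) (hA : ThickSub A) (hs : SummandClosed A) :
    CokernelClosed A := fun _ _ f hX hY =>
  hs.isoClosed _ _ ((cokernelIsoOfEq (Abelian.image.fac f).symm).trans
      (cokernelEpiComp (Abelian.factorThruImage f) (Abelian.image.ι f))).symm
    ((hA _ _ _ _ _ (isShortExact_cokernel_π _)).1 (hA.mem_image hH hs f hX hY) hY)

lemma ThickSub.extClosed (hA : ThickSub A) : ExtClosed A :=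
  fun _ _ _ _ _ hfg => (hA _ _ _ _ _ hfg).2.1

lemma thickSub_of_closed (hi : IsoClosed A) (he : ExtClosed A) (hk : KernelClosed A)
    (hc : CokernelClosed A) : ThickSub A := fun X Y Z f g hfg =>
  ⟨fun hX hY => hi _ _ (IsColimit.coconePointUniqueUpToIso (cokernelIsCokernel f)
      hfg.2.gIsCokernel) (hc X Y f hX hY),
    he X Y Z f g hfg,
    fun hY hZ => hi _ _ (IsLimit.conePointUniqueUpToIso (kernelIsKernel g) hfg.2.fIsKernel)
      (hk Y Z g hY hZ)⟩

end Thick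

theorem abelian_extClosed_iff_thick_general
    (hH : Hereditary H) (A : H → Prop)
    (hsummand : SummandClosed A) :
    (ExtClosed A ∧ KernelClosed A ∧ CokernelClosed A) ↔ ThickSub A :=
  ⟨fun ⟨he, hk, hc⟩ => thickSub_of_closed hsummand.isoClosed he hk hc,
    fun hA => ⟨hA.extClosed, hA.kernelClosed hH hsummand, hA.cokernelClosed hH hsummand⟩⟩

/-- in a hereditary abelian `k`-category `H`, a full subcategory
closed under direct summands (and isomorphisms) is an exact abelian,
extension-closed subcategory iff it is thick. -/
theorem abelian_extClosed_iff_thick (k : Type) [Field k] [Linear k H]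
    (hH : Hereditary H) (A : H → Prop)
    (hiso : IsoClosed A) (hsummand : SummandClosed A) :
    (ExtClosed A ∧ KernelClosed A ∧ CokernelClosed A) ↔ ThickSub A :=
  abelian_extClosed_iff_thick_general hH A hsummand
end

section
/- Let Q be an acyclic quiver, d a prehomogeneous dimension vector, and V = M(d) the (rigid) general representation of dimension vector d. Then the semi-stable subcategory rep(Q)_d equals V^⊥ = {M : Hom(V,M) = 0 = Ext^1(V,M)}. -/
open Matrix BigOperators

/-- A finite quiver: `n` vertices, `a` arrows with source and target maps. -/
structure FinQuiver where
  n : ℕ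
  a : ℕ
  src : Fin a → Fin n
  tgt : Fin a → Fin n

namespace FinQuiver

/-- A finite quiver is acyclic iff it admits a topological ordering of vertices. -/
def Acyclic (Q : FinQuiver) : Prop :=
  ∃ h : Fin Q.n → ℕ, ∀ x, h (Q.src x) < h (Q.tgt x)

/-- Connectivity of the underlying graph. -/
def Connected (Q : FinQuiver) : Prop :=
  ∀ S : Finset (Fin Q.n), S.Nonempty → S ≠ Finset.univ →
    ∃ x, (Q.src x ∈ S ∧ Q.tgt x ∉ S) ∨ (Q.tgt x ∈ S ∧ Q.src x ∉ S)

/-- The Euler form ⟨d,e⟩ = Σ_i d_i e_i − Σ_{α : i → j} d_i e_j. -/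
def euler (Q : FinQuiver) (d e : Fin Q.n → ℤ) : ℤ :=
  (∑ i, d i * e i) - ∑ x, d (Q.src x) * e (Q.tgt x)

/-- A (possibly disconnected) Dynkin quiver: acyclic with positive definite Tits form. -/
def IsDynkin (Q : FinQuiver) : Prop :=
  Q.Acyclic ∧ ∀ d : Fin Q.n → ℤ, d ≠ 0 → 0 < Q.euler d d

/-- `δ` is the null root: positive, isotropic, and every isotropic vector is an
integer multiple of `δ`. -/
def IsNullRoot (Q : FinQuiver) (δ : Fin Q.n → ℤ) : Prop :=
  (∀ i, 0 < δ i) ∧ Q.euler δ δ = 0 ∧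
    ∀ d : Fin Q.n → ℤ, Q.euler d d = 0 → ∃ m : ℤ, d = m • δ

/-- A Euclidean (affine) quiver: connected, acyclic, positive semidefinite Tits form
with a null root. -/
def IsEuclidean (Q : FinQuiver) : Prop :=
  Q.Acyclic ∧ Q.Connected ∧ (∀ d, 0 ≤ Q.euler d d) ∧ ∃ δ, Q.IsNullRoot δ

end FinQuiver

/-- A finite-dimensional representation of `Q` over `k`: dimensions at each vertex,
and a matrix for each arrow. -/
structure QRep (k : Type) [Field k] (Q : FinQuiver) where
  d : Fin Q.n → ℕ
  mat : ∀ x : Fin Q.a, Matrix (Fin (d (Q.tgt x))) (Fin (d (Q.src x))) k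

namespace QRep

variable {k : Type} [Field k] {Q : FinQuiver}

/-- The dimension vector of a representation, as an integer vector. -/
def dimVec (M : QRep k Q) : Fin Q.n → ℤ := fun i => (M.d i : ℤ)

/-- The space of morphisms of representations `M → N`. -/
def homSpace (M N : QRep k Q) :
    Submodule k (∀ i, Matrix (Fin (N.d i)) (Fin (M.d i)) k) where
  carrier := {f | ∀ x, f (Q.tgt x) * M.mat x = N.mat x * f (Q.src x)}
  add_mem' := by
    intro f g hf hg x
    simp only [Pi.add_apply, Matrix.add_mul, Matrix.mul_add, hf x, hg x]
  zero_mem' := by intro x; simp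
  smul_mem' := by
    intro c f hf x
    simp only [Pi.smul_apply, Matrix.smul_mul, Matrix.mul_smul, hf x]

/-- The standard map whose kernel is `Hom(M,N)` and cokernel is `Ext¹(M,N)`. -/
def extMap (M N : QRep k Q) :
    (∀ i, Matrix (Fin (N.d i)) (Fin (M.d i)) k) →ₗ[k]
    (∀ x : Fin Q.a, Matrix (Fin (N.d (Q.tgt x))) (Fin (M.d (Q.src x))) k) where
  toFun f := fun x => f (Q.tgt x) * M.mat x - N.mat x * f (Q.src x)
  map_add' := by
    intro f g; funext x
    simp only [Pi.add_apply, Matrix.add_mul, Matrix.mul_add]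
    abel
  map_smul' := by
    intro c f; funext x
    simp only [Pi.smul_apply, Matrix.smul_mul, Matrix.mul_smul, RingHom.id_apply,
      smul_sub]

/-- dim_k Hom(M,N). -/
noncomputable def homDim (M N : QRep k Q) : ℕ :=
  Module.finrank k (homSpace M N)

/-- dim_k Ext¹(M,N), defined as the dimension of the cokernel of `extMap`. -/
noncomputable def extDim (M N : QRep k Q) : ℕ :=
  Module.finrank k
    ((∀ x : Fin Q.a, Matrix (Fin (N.d (Q.tgt x))) (Fin (M.d (Q.src x))) k) ⧸
      LinearMap.range (extMap M N))

/-- Isomorphism of representations. -/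
def IsoRep (M N : QRep k Q) : Prop :=
  ∃ f ∈ homSpace M N, ∀ i, Function.Bijective (Matrix.mulVecLin (f i))

/-- `L` is (the source of a monomorphism into) a subrepresentation of `M`. -/
def IsSubrep (L M : QRep k Q) : Prop :=
  ∃ f ∈ homSpace L M, ∀ i, Function.Injective (Matrix.mulVecLin (f i))

/-- `L` is a direct summand of `M` (split monomorphism with retraction). -/
def IsSummand (L M : QRep k Q) : Prop :=
  ∃ f ∈ homSpace L M, ∃ g ∈ homSpace M L, ∀ i, g i * f i = 1

/-- `M` is indecomposable: nonzero, and its endomorphism ring has no nontrivial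
idempotents. -/
def Indec (M : QRep k Q) : Prop :=
  (∃ i, M.d i ≠ 0) ∧
    ∀ f ∈ homSpace M M, (∀ i, f i * f i = f i) → f = 0 ∨ f = 1

/-- An exceptional representation: indecomposable and rigid. -/
def Exceptional (M : QRep k Q) : Prop :=
  Indec M ∧ extDim M M = 0

/-- `(f, g)` form a short exact sequence `0 → A → B → C → 0` of representations. -/
def IsSES (A B C : QRep k Q)
    (f : ∀ i, Matrix (Fin (B.d i)) (Fin (A.d i)) k)
    (g : ∀ i, Matrix (Fin (C.d i)) (Fin (B.d i)) k) : Prop :=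
  f ∈ homSpace A B ∧ g ∈ homSpace B C ∧
    ∀ i, Function.Injective (Matrix.mulVecLin (f i)) ∧
      Function.Surjective (Matrix.mulVecLin (g i)) ∧
      LinearMap.range (Matrix.mulVecLin (f i)) = LinearMap.ker (Matrix.mulVecLin (g i))

/-- A thick (= abelian and extension-closed, since rep(Q) is hereditary) full
subcategory: closed under isomorphism, direct summands and two-out-of-three for
short exact sequences. -/
def Thick (P : QRep k Q → Prop) : Prop :=
  (∀ M N, IsoRep M N → P M → P N) ∧
  (∀ L M, IsSummand L M → P M → P L) ∧
  (∀ A B C f g, IsSES A B C f g →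
    ((P A → P B → P C) ∧ (P A → P C → P B) ∧ (P B → P C → P A)))

/-- `P` is the smallest thick subcategory containing `S`. -/
def GeneratedBy (P : QRep k Q → Prop) (S : Set (QRep k Q)) : Prop :=
  Thick P ∧ (∀ X ∈ S, P X) ∧
    ∀ P' : QRep k Q → Prop, Thick P' → (∀ X ∈ S, P' X) → ∀ M, P M → P' M

/-- An exceptional sequence. -/
def ExcSeq {r : ℕ} (E : Fin r → QRep k Q) : Prop :=
  (∀ i, Exceptional (E i) ∧ homDim (E i) (E i) = 1) ∧
    ∀ i j : Fin r, i < j → homDim (E i) (E j) = 0 ∧ extDim (E i) (E j) = 0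

/-- King's criterion for `⟨d,−⟩`-semi-stability. -/
def SemiStable (d : Fin Q.n → ℤ) (M : QRep k Q) : Prop :=
  Q.euler d M.dimVec = 0 ∧ ∀ L : QRep k Q, IsSubrep L M → Q.euler d L.dimVec ≤ 0

/-- `M` is regular: every indecomposable summand pairs to zero with the null root. -/
def RegularRep (δ : Fin Q.n → ℤ) (M : QRep k Q) : Prop :=
  ∀ L, IsSummand L M → Indec L → Q.euler δ L.dimVec = 0

/-- `M` is in the right perpendicular category of `V`. -/
def RPerp (V M : QRep k Q) : Prop := homDim V M = 0 ∧ extDim V M = 0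

/-- `M` is in the left perpendicular category of `V`. -/
def LPerp (V M : QRep k Q) : Prop := homDim M V = 0 ∧ extDim M V = 0

/-- `P` is a projective representation (Ext¹(P,−) = 0). -/
def IsProjRep (P : QRep k Q) : Prop := ∀ M : QRep k Q, extDim P M = 0

end QRep

/-- `α` is a Schur root: the dimension vector of an indecomposable representation
with trivial endomorphism ring. -/
def IsSchurRoot (k : Type) [Field k] (Q : FinQuiver) (α : Fin Q.n → ℤ) : Prop :=
  ∃ M : QRep k Q, M.dimVec = α ∧ QRep.Indec M ∧ QRep.homDim M M = 1

/-- `ext(α,β) = 0`: some representations of these dimension vectors have no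
extensions. -/
def ExtZero (k : Type) [Field k] (Q : FinQuiver) (α β : Fin Q.n → ℤ) : Prop :=
  ∃ M N : QRep k Q, M.dimVec = α ∧ N.dimVec = β ∧ QRep.extDim M N = 0

/-- Kac's characterization of the canonical decomposition: `c` is the canonical
decomposition of `d` iff the entries sum to `d`, are Schur roots, and are pairwise
ext-orthogonal. -/
def IsCanonDecomp (k : Type) [Field k] (Q : FinQuiver) (d : Fin Q.n → ℤ)
    (c : List (Fin Q.n → ℤ)) : Prop :=
  c.sum = d ∧ (∀ α ∈ c, IsSchurRoot k Q α) ∧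
    ∀ i j : Fin c.length, i ≠ j → ExtZero k Q (c.get i) (c.get j)

/-! `⟨dim V, −⟩ = hom(V, −) − ext(V, −)`, so for `M` with `⟨dim V, dim M⟩ = 0` membership in
`V^⊥` amounts to `Hom(V, M) = 0`. A nonzero `f : V → M` has an image `L ⊆ M` which is a quotient
of `V`; since `Ext¹(V, −)` is right exact and `V` is rigid, `Ext¹(V, L) = 0`, hence
`⟨dim V, dim L⟩ = hom(V, L) > 0` and `M` is not semi-stable. Conversely, if `M ∈ V^⊥` then every
subrepresentation `L` has `Hom(V, L) = 0`, so `⟨dim V, dim L⟩ = -ext(V, L) ≤ 0`. -/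

theorem LinearMap.mulVecLin_toMatrix' {k m n : Type*} [CommSemiring k] [Fintype n] [DecidableEq n]
    (f : (n → k) →ₗ[k] m → k) : (LinearMap.toMatrix' f).mulVecLin = f := by
  rw [← Matrix.toLin'_apply', Matrix.toLin'_toMatrix']

namespace Matrix

variable {k : Type} [Field k] {l m n : Type*} [Fintype m]

theorem mul_right_injective_of_mulVecLin_injective {B : Matrix l m k}
    (hB : Function.Injective B.mulVecLin) : Function.Injective (fun X : Matrix m n k => B * X) := by
  cases isEmpty_or_nonempty n
  · exact Function.injective_of_subsingleton _
  · exact mul_right_injective_iff_mulVec_injective.2 hB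

theorem exists_mul_eq_of_range_eq [Fintype n] {A : Matrix l n k} {B : Matrix l m k}
    (hB : Function.Injective B.mulVecLin)
    (h : LinearMap.range A.mulVecLin = LinearMap.range B.mulVecLin) :
    ∃ C : Matrix m n k, B * C = A ∧ Function.Surjective C.mulVecLin := by
  classical
  let e := LinearEquiv.ofInjective B.mulVecLin hB
  let A' := A.mulVecLin.codRestrict (LinearMap.range B.mulVecLin) fun v => h ▸ ⟨v, rfl⟩
  refine ⟨LinearMap.toMatrix' (e.symm.toLinearMap ∘ₗ A'), ?_, ?_⟩
  · refine ext_iff_mulVec.2 fun v => ?_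
    simp only [← mulVec_mulVec, LinearMap.toMatrix'_mulVec, LinearMap.comp_apply]
    rw [← Matrix.mulVecLin_apply, LinearEquiv.coe_coe, LinearEquiv.ofInjective_symm_apply]
    rfl
  · rw [LinearMap.mulVecLin_toMatrix', LinearMap.coe_comp]
    refine e.symm.surjective.comp fun ⟨y, hy⟩ => ?_
    obtain ⟨v, rfl⟩ := h ▸ hy
    exact ⟨v, rfl⟩

theorem exists_mul_eq_of_surjective [Fintype l] {B : Matrix l m k}
    (hB : Function.Surjective B.mulVecLin) (A : Matrix l n k) : ∃ C : Matrix m n k, B * C = A := by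
  classical
  obtain ⟨s, hs⟩ :=
    LinearMap.exists_rightInverse_of_surjective B.mulVecLin (LinearMap.range_eq_top.2 hB)
  have hBs : B * LinearMap.toMatrix' s = 1 := by
    apply Matrix.toLin'.injective
    rw [Matrix.toLin'_mul, Matrix.toLin'_toMatrix', Matrix.toLin'_one, Matrix.toLin'_apply', hs]
  exact ⟨LinearMap.toMatrix' s * A, by rw [← Matrix.mul_assoc, hBs, Matrix.one_mul]⟩

end Matrix

theorem Module.finrank_pi_matrix_fin (k : Type*) [Field k] {ι : Type*} [Fintype ι] (a b : ι → ℕ) :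
    Module.finrank k (∀ j, Matrix (Fin (a j)) (Fin (b j)) k) = ∑ j, a j * b j := by
  simp [Module.finrank_pi_fintype, Module.finrank_matrix]

namespace QRep

variable {k : Type} [Field k] {Q : FinQuiver}

theorem mul_mem_homSpace {L M N : QRep k Q} {f : ∀ i, Matrix (Fin (M.d i)) (Fin (L.d i)) k}
    {g : ∀ i, Matrix (Fin (N.d i)) (Fin (M.d i)) k} (hf : f ∈ homSpace L M)
    (hg : g ∈ homSpace M N) : (fun i => g i * f i) ∈ homSpace L N := fun x => by
  change g _ * f _ * L.mat x = N.mat x * (g _ * f _)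
  rw [Matrix.mul_assoc, hf x, ← Matrix.mul_assoc, hg x, Matrix.mul_assoc]

theorem mem_homSpace_of_mul_mem {V L M : QRep k Q} {ι : ∀ i, Matrix (Fin (M.d i)) (Fin (L.d i)) k}
    (hι : ι ∈ homSpace L M) (hinj : ∀ i, Function.Injective (ι i).mulVecLin)
    {p : ∀ i, Matrix (Fin (L.d i)) (Fin (V.d i)) k} (hp : (fun i => ι i * p i) ∈ homSpace V M) :
    p ∈ homSpace V L := fun x => by
  apply Matrix.mul_right_injective_of_mulVecLin_injective (hinj (Q.tgt x))
  change ι _ * (p _ * V.mat x) = ι _ * (L.mat x * p _)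
  rw [← Matrix.mul_assoc, hp x, ← Matrix.mul_assoc (ι _), hι x, Matrix.mul_assoc]

theorem homSpace_eq_ker (M N : QRep k Q) : homSpace M N = LinearMap.ker (extMap M N) := by
  ext f
  simp only [LinearMap.mem_ker, funext_iff, Pi.zero_apply]
  exact forall_congr' fun _ => sub_eq_zero.symm

theorem homDim_eq_zero_iff {M N : QRep k Q} : homDim M N = 0 ↔ homSpace M N = ⊥ :=
  Submodule.finrank_eq_zero

theorem extDim_eq_zero_iff {M N : QRep k Q} :
    extDim M N = 0 ↔ LinearMap.range (extMap M N) = ⊤ := by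
  rw [extDim, Module.finrank_zero_iff, Submodule.Quotient.subsingleton_iff]

theorem euler_dimVec (M N : QRep k Q) :
    Q.euler M.dimVec N.dimVec = (homDim M N : ℤ) - extDim M N := by
  have rank_nullity := LinearMap.finrank_range_add_finrank_ker (extMap M N)
  have coker := (LinearMap.range (extMap M N)).finrank_quotient_add_finrank
  rw [← homSpace_eq_ker, Module.finrank_pi_matrix_fin] at rank_nullity
  rw [Module.finrank_pi_matrix_fin] at coker
  simp only [FinQuiver.euler, dimVec, homDim, extDim]
  zify at rank_nullity coker
  push_cast [mul_comm (M.d _ : ℤ)] at rank_nullity coker ⊢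
  linarith

theorem extDim_eq_zero_of_surjective {X N L : QRep k Q}
    {p : ∀ i, Matrix (Fin (L.d i)) (Fin (N.d i)) k} (hp : p ∈ homSpace N L)
    (hsurj : ∀ i, Function.Surjective (p i).mulVecLin) (hXN : extDim X N = 0) :
    extDim X L = 0 := by
  rw [extDim_eq_zero_iff, eq_top_iff] at hXN ⊢
  rintro η -
  choose ζ hζ using fun x => Matrix.exists_mul_eq_of_surjective (hsurj (Q.tgt x)) (η x)
  obtain ⟨g, hg⟩ := hXN (Submodule.mem_top (x := ζ))
  refine ⟨fun i => p i * g i, funext fun x => ?_⟩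
  change p (Q.tgt x) * g (Q.tgt x) * X.mat x - L.mat x * (p (Q.src x) * g (Q.src x)) = η x
  rw [← Matrix.mul_assoc (L.mat x), ← hp x, Matrix.mul_assoc (p _), Matrix.mul_assoc (p _),
    ← Matrix.mul_sub (p _), ← hζ x]
  exact congrArg _ (congrFun hg x)

theorem homDim_eq_zero_of_isSubrep {X L M : QRep k Q} (hLM : IsSubrep L M)
    (hXM : homDim X M = 0) : homDim X L = 0 := by
  obtain ⟨ι, hι, hinj⟩ := hLM
  rw [homDim_eq_zero_iff, Submodule.eq_bot_iff] at hXM ⊢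
  intro h hh
  have hιh : (fun i => ι i * h i) = 0 := hXM _ (mul_mem_homSpace hh hι)
  funext i
  exact Matrix.mul_right_injective_of_mulVecLin_injective (hinj i)
    ((congrFun hιh i).trans (Matrix.mul_zero _).symm)

theorem exists_subrep_of_invariant (M : QRep k Q) (W : ∀ i, Submodule k (Fin (M.d i) → k))
    (hW : ∀ x, ∀ v ∈ W (Q.src x), (M.mat x).mulVecLin v ∈ W (Q.tgt x)) :
    ∃ (L : QRep k Q) (ι : ∀ i, Matrix (Fin (M.d i)) (Fin (L.d i)) k), ι ∈ homSpace L M ∧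
      ∀ i, Function.Injective (ι i).mulVecLin ∧ LinearMap.range (ι i).mulVecLin = W i := by
  let e i : (Fin (Module.finrank k (W i)) → k) ≃ₗ[k] W i := (Module.finBasis k (W i)).equivFun.symm
  let L : QRep k Q :=
    { d := fun i => Module.finrank k (W i)
      mat := fun x => LinearMap.toMatrix'
        ((e (Q.tgt x)).symm.toLinearMap ∘ₗ (M.mat x).mulVecLin.restrict (hW x) ∘ₗ e (Q.src x)) }
  refine ⟨L, fun i => LinearMap.toMatrix' ((W i).subtype ∘ₗ e i), fun x => ?_, fun i => ⟨?_, ?_⟩⟩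
  · refine Matrix.ext_iff_mulVec.2 fun v => ?_
    simp [L, ← Matrix.mulVec_mulVec, LinearMap.toMatrix'_mulVec]
  · simp only [LinearMap.mulVecLin_toMatrix', LinearMap.coe_comp, Submodule.coe_subtype]
    exact Subtype.val_injective.comp (e i).injective
  · rw [LinearMap.mulVecLin_toMatrix', LinearMap.range_comp_of_range_eq_top _ (e i).range,
      Submodule.range_subtype]

theorem exists_image_factorization {V M : QRep k Q}
    {f : ∀ i, Matrix (Fin (M.d i)) (Fin (V.d i)) k} (hf : f ∈ homSpace V M) :
    ∃ (L : QRep k Q) (ι : ∀ i, Matrix (Fin (M.d i)) (Fin (L.d i)) k)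
      (p : ∀ i, Matrix (Fin (L.d i)) (Fin (V.d i)) k),
      ι ∈ homSpace L M ∧ (∀ i, Function.Injective (ι i).mulVecLin) ∧
      p ∈ homSpace V L ∧ (∀ i, Function.Surjective (p i).mulVecLin) ∧ ∀ i, ι i * p i = f i := by
  obtain ⟨L, ι, hι, hιW⟩ :=
    exists_subrep_of_invariant M (fun i => LinearMap.range (f i).mulVecLin) fun x => by
      rintro _ ⟨v, rfl⟩
      exact ⟨V.mat x *ᵥ v, by simp only [Matrix.mulVecLin_apply, Matrix.mulVec_mulVec, hf x]⟩
  choose p hp using fun i => Matrix.exists_mul_eq_of_range_eq (hιW i).1 (hιW i).2.symm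
  have hιp : (fun i => ι i * p i) = f := funext fun i => (hp i).1
  have hinj i := (hιW i).1
  exact ⟨L, ι, p, hι, hinj, mem_homSpace_of_mul_mem hι hinj (hιp ▸ hf), fun i => (hp i).2,
    fun i => (hp i).1⟩

theorem homDim_eq_zero_of_semiStable {V M : QRep k Q} (hV : extDim V V = 0)
    (hM : SemiStable V.dimVec M) : homDim V M = 0 := by
  by_contra hne
  obtain ⟨f, hf, hf0⟩ := Submodule.exists_mem_ne_zero_of_ne_bot (mt homDim_eq_zero_iff.2 hne)
  obtain ⟨L, ι, p, hι, hinj, hp, hsurj, hιp⟩ := exists_image_factorization hf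
  have hVL_ext : extDim V L = 0 := extDim_eq_zero_of_surjective hp hsurj hV
  have hVL_hom : homDim V L ≠ 0 := fun h => hf0 <| by
    have hp0 : p = 0 := (Submodule.eq_bot_iff _).1 (homDim_eq_zero_iff.1 h) p hp
    funext i
    rw [← hιp i, hp0]
    exact Matrix.mul_zero _
  have hL := hM.2 L ⟨ι, hι, hinj⟩
  rw [euler_dimVec, hVL_ext] at hL
  omega

theorem semiStable_of_rPerp {V M : QRep k Q} (hM : RPerp V M) : SemiStable V.dimVec M := by
  refine ⟨by rw [euler_dimVec, hM.1, hM.2]; rfl, fun L hL => ?_⟩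
  rw [euler_dimVec, homDim_eq_zero_of_isSubrep hL hM.1]
  simp

end QRep

open QRep in
theorem semistable_eq_perp_general (k : Type) [Field k]
    (Q : FinQuiver) (V : QRep k Q) (hV : extDim V V = 0) :
    ∀ M : QRep k Q, SemiStable V.dimVec M ↔ RPerp V M := by
  intro M
  refine ⟨fun hM => ?_, semiStable_of_rPerp⟩
  have hhom := homDim_eq_zero_of_semiStable hV hM
  have heuler := hM.1
  rw [euler_dimVec, hhom] at heuler
  exact ⟨hhom, by omega⟩

open QRep in
/-- for a prehomogeneous dimension vector `d` with rigid general
representation `V = M(d)` (i.e. a rigid `V` of dimension vector `d`), the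
semi-stable subcategory rep(Q)_d equals `V^⊥`. -/
theorem semistable_eq_perp (k : Type) [Field k] [IsAlgClosed k]
    (Q : FinQuiver) (hQ : Q.Acyclic) (V : QRep k Q) (hV : extDim V V = 0) :
    ∀ M : QRep k Q, SemiStable V.dimVec M ↔ RPerp V M :=
  semistable_eq_perp_general k Q V hV
end

section
/- Let Q be a Euclidean quiver with a dimension vector d that has the null root δ as a summand in its canonical decomposition. Then every real Schur root appearing in the canonical decomposition of d is regular. -/
open Matrix BigOperators

section Aux

open QRep

variable {k : Type} [Field k] {Q : FinQuiver}

lemma ker_extMap (M N : QRep k Q) :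
    LinearMap.ker (extMap M N) = homSpace M N := by
  ext f
  constructor
  · intro h x
    have h' : (extMap M N) f = 0 := h
    have := congrFun h' x
    simpa [extMap, sub_eq_zero] using this
  · intro h
    have : (extMap M N) f = 0 := by
      funext x
      simp [extMap, sub_eq_zero, h x]
    exact this

lemma euler_hom_sub_ext (M N : QRep k Q) :
    Q.euler M.dimVec N.dimVec = (homDim M N : ℤ) - (extDim M N : ℤ) := by
  classical
  have hD : Module.finrank k (∀ i, Matrix (Fin (N.d i)) (Fin (M.d i)) k)
      = ∑ i, M.d i * N.d i := by
    rw [Module.finrank_pi_fintype]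
    simp [Module.finrank_matrix, Nat.mul_comm]
  have hC : Module.finrank k
        (∀ x : Fin Q.a, Matrix (Fin (N.d (Q.tgt x))) (Fin (M.d (Q.src x))) k)
      = ∑ x, M.d (Q.src x) * N.d (Q.tgt x) := by
    rw [Module.finrank_pi_fintype]
    simp [Module.finrank_matrix, Nat.mul_comm]
  have h1 := LinearMap.finrank_range_add_finrank_ker (extMap M N)
  have h2 := Submodule.finrank_quotient_add_finrank (LinearMap.range (extMap M N))
  rw [ker_extMap, hD] at h1
  rw [hC] at h2
  have h3 : Q.euler M.dimVec N.dimVec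
      = ((∑ i, M.d i * N.d i : ℕ) : ℤ)
        - ((∑ x, M.d (Q.src x) * N.d (Q.tgt x) : ℕ) : ℤ) := by
    simp [FinQuiver.euler, dimVec]
  rw [h3]
  unfold homDim extDim
  omega

lemma extZero_euler_nonneg {α β : Fin Q.n → ℤ} (h : ExtZero k Q α β) :
    0 ≤ Q.euler α β := by
  obtain ⟨M, N, hM, hN, he⟩ := h
  have := euler_hom_sub_ext M N
  rw [hM, hN] at this
  rw [this, he]
  simp

lemma euler_add_left (x y z : Fin Q.n → ℤ) :
    Q.euler (x + y) z = Q.euler x z + Q.euler y z := by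
  simp [FinQuiver.euler, add_mul, Finset.sum_add_distrib]
  ring

lemma euler_add_right (x y z : Fin Q.n → ℤ) :
    Q.euler x (y + z) = Q.euler x y + Q.euler x z := by
  simp [FinQuiver.euler, mul_add, Finset.sum_add_distrib]
  ring

lemma euler_smul_left (t : ℤ) (x y : Fin Q.n → ℤ) :
    Q.euler (t • x) y = t * Q.euler x y := by
  simp [FinQuiver.euler, smul_eq_mul, mul_sub, Finset.mul_sum, mul_assoc]

lemma euler_smul_right (t : ℤ) (x y : Fin Q.n → ℤ) :
    Q.euler x (t • y) = t * Q.euler x y := by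
  simp [FinQuiver.euler, smul_eq_mul, mul_sub, Finset.mul_sum, mul_left_comm]

end Aux

open QRep in
/-- if the null root `δ` occurs in the canonical decomposition of a
dimension vector `d` over a Euclidean quiver, then every real Schur root in that
canonical decomposition is regular (pairs to zero with `δ`). -/
theorem canonDecomp_null_forces_regular (k : Type) [Field k] [IsAlgClosed k]
    (Q : FinQuiver) (hQ : Q.IsEuclidean) (δ : Fin Q.n → ℤ) (hδ : Q.IsNullRoot δ)
    (d : Fin Q.n → ℤ) (c : List (Fin Q.n → ℤ)) (hc : IsCanonDecomp k Q d c)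
    (hδc : δ ∈ c) (α : Fin Q.n → ℤ) (hαc : α ∈ c) (hα : Q.euler α α = 1) :
    Q.euler δ α = 0 := by
  obtain ⟨i, hi⟩ := List.mem_iff_get.mp hαc
  obtain ⟨j, hj⟩ := List.mem_iff_get.mp hδc
  have hne : α ≠ δ := by
    intro h
    rw [h, hδ.2.1] at hα
    exact one_ne_zero hα.symm
  have hij : i ≠ j := by
    intro h; apply hne; rw [← hi, ← hj, h]
  have e1 : 0 ≤ Q.euler α δ := by
    have := hc.2.2 i j hij
    rw [hi, hj] at this
    exact extZero_euler_nonneg this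
  have e2 : 0 ≤ Q.euler δ α := by
    have := hc.2.2 j i (Ne.symm hij)
    rw [hi, hj] at this
    exact extZero_euler_nonneg this
  have key : ∀ t : ℤ, 0 ≤ t * (Q.euler δ α + Q.euler α δ) + 1 := by
    intro t
    have h0 := hQ.2.2.1 (t • δ + α)
    rw [euler_add_left, euler_add_right, euler_add_right, euler_smul_left,
      euler_smul_left, euler_smul_right, euler_smul_right, hδ.2.1, hα] at h0
    nlinarith [h0]
  set s := Q.euler δ α + Q.euler α δ with hs
  have h2 : 0 ≤ (-2 * s) * s + 1 := key (-2 * s)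
  have hs0 : s = 0 := by nlinarith [mul_self_nonneg s]
  linarith
end
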